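/- Let R_bl = ℚ[x₁,…,x₇]/I_bl, where I_bl is the ideal generated by the linear forms x₁−x₅+x₇, x₂−x₅+x₇, x₃−x₅+x₇, x₄−x₅−x₆+x₇ and the monomials x₁x₂x₃x₄, x₁x₂x₃x₅, x₄x₆, x₅x₇, x₆x₇. Then the images of the eleven monomials 1, x₅, x₆, x₇, x₅², x₆², x₇², x₅³, x₆³, x₇³, x₇⁴ form a ℚ-vector space basis of R_bl; in particular dim_ℚ R_bl = 11. -/

import Mathlib

open MvPolynomial

noncomputable section

/-- The Stanley–Reisner-style presentation ideal for `H^*(ℙ⁴_bl, ℚ)`.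
Variables `X 0, …, X 6` correspond to `x₁, …, x₇`. -/
def Ibl : Ideal (MvPolynomial (Fin 7) ℚ) := Ideal.span
  {X 0 - X 4 + X 6, X 1 - X 4 + X 6, X 2 - X 4 + X 6, X 3 - X 4 - X 5 + X 6,
   X 0 * X 1 * X 2 * X 3, X 0 * X 1 * X 2 * X 4, X 3 * X 5, X 4 * X 6, X 5 * X 6}

/-- The rational cohomology ring of `ℙ⁴_bl`. -/
def Rbl : Type := MvPolynomial (Fin 7) ℚ ⧸ Ibl

instance : CommRing Rbl := Ideal.Quotient.commRing Ibl
instance : Algebra ℚ Rbl := Ideal.Quotient.algebra ℚ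

/-- The eleven monomials `1, x₅, x₆, x₇, x₅², x₆², x₇², x₅³, x₆³, x₇³, x₇⁴` in `Rbl`. -/
def rblBasisElems : Fin 11 → Rbl := fun i =>
  Ideal.Quotient.mk Ibl
    (![1, X 4, X 5, X 6, X 4 ^ 2, X 5 ^ 2, X 6 ^ 2, X 4 ^ 3, X 5 ^ 3, X 6 ^ 3, X 6 ^ 4] i)

namespace RblAux

def Za : Matrix (Fin 11) (Fin 11) ℤ :=
  !![0, 0, 0, 0, 0, 0, 0, 0, 0, 0, 0;
     1, 0, 0, 0, 0, 0, 0, 0, 0, 0, 0;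
     0, 0, 0, 0, 0, 0, 0, 0, 0, 0, 0;
     0, 0, 0, 0, 0, 0, 0, 0, 0, 0, 0;
     0, 1, 0, 0, 0, 0, 0, 0, 0, 0, 0;
     0, 0, -1, 0, 0, 0, 0, 0, 0, 0, 0;
     0, 0, 0, 0, 0, 0, 0, 0, 0, 0, 0;
     0, 0, 0, 0, 1, 0, 0, 0, 0, 0, 0;
     0, 0, 0, 0, 0, -1, 0, 0, 0, 0, 0;
     0, 0, 0, 0, 0, 0, 0, 0, 0, 0, 0;
     0, 0, 0, 0, 0, 0, 0, 0, -1, 0, 0]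

def Zb : Matrix (Fin 11) (Fin 11) ℤ :=
  !![0, 0, 0, 0, 0, 0, 0, 0, 0, 0, 0;
     0, 0, 0, 0, 0, 0, 0, 0, 0, 0, 0;
     1, 0, 0, 0, 0, 0, 0, 0, 0, 0, 0;
     0, 0, 0, 0, 0, 0, 0, 0, 0, 0, 0;
     0, 0, 0, 0, 0, 0, 0, 0, 0, 0, 0;
     0, -1, 1, 0, 0, 0, 0, 0, 0, 0, 0;
     0, 0, 0, 0, 0, 0, 0, 0, 0, 0, 0;
     0, 0, 0, 0, 0, 0, 0, 0, 0, 0, 0;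
     0, 0, 0, 0, 1, 1, 0, 0, 0, 0, 0;
     0, 0, 0, 0, 0, 0, 0, 0, 0, 0, 0;
     0, 0, 0, 0, 0, 0, 0, -1, 1, 0, 0]

def Zc : Matrix (Fin 11) (Fin 11) ℤ :=
  !![0, 0, 0, 0, 0, 0, 0, 0, 0, 0, 0;
     0, 0, 0, 0, 0, 0, 0, 0, 0, 0, 0;
     0, 0, 0, 0, 0, 0, 0, 0, 0, 0, 0;
     1, 0, 0, 0, 0, 0, 0, 0, 0, 0, 0;
     0, 0, 0, 0, 0, 0, 0, 0, 0, 0, 0;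
     0, 0, 0, 0, 0, 0, 0, 0, 0, 0, 0;
     0, 0, 0, 1, 0, 0, 0, 0, 0, 0, 0;
     0, 0, 0, 0, 0, 0, 0, 0, 0, 0, 0;
     0, 0, 0, 0, 0, 0, 0, 0, 0, 0, 0;
     0, 0, 0, 0, 0, 0, 1, 0, 0, 0, 0;
     0, 0, 0, 0, 0, 0, 0, 0, 0, 1, 0]


/-- Entrywise `ℤ → ℚ` on our matrices, as a ring hom. -/
def F : Matrix (Fin 11) (Fin 11) ℤ →+* Matrix (Fin 11) (Fin 11) ℚ :=
  (Int.castRingHom ℚ).mapMatrix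

/-- The commutative matrix algebra generated by the three multiplication operators. -/
def Adj : Subalgebra ℚ (Matrix (Fin 11) (Fin 11) ℚ) :=
  Algebra.adjoin ℚ ({F Za, F Zb, F Zc} : Set (Matrix (Fin 11) (Fin 11) ℚ))

instance : CommRing Adj := Algebra.adjoinCommRingOfComm ℚ (by
  rintro x hx y hy
  simp only [Set.mem_insert_iff, Set.mem_singleton_iff] at hx hy
  rcases hx with rfl | rfl | rfl <;> rcases hy with rfl | rfl | rfl <;>
    first
      | rfl
      | (rw [← map_mul, ← map_mul]; exact congrArg _ (by decide)))

instance : @Algebra ℚ Adj _ (inferInstance : CommSemiring Adj).toSemiring := Subalgebra.algebra _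

def a' : Adj := ⟨F Za, Algebra.subset_adjoin (by simp)⟩
def b' : Adj := ⟨F Zb, Algebra.subset_adjoin (by simp)⟩
def c' : Adj := ⟨F Zc, Algebra.subset_adjoin (by simp)⟩

lemma a'_coe : ((a' : Adj) : Matrix (Fin 11) (Fin 11) ℚ) = F Za := rfl
lemma b'_coe : ((b' : Adj) : Matrix (Fin 11) (Fin 11) ℚ) = F Zb := rfl
lemma c'_coe : ((c' : Adj) : Matrix (Fin 11) (Fin 11) ℚ) = F Zc := rfl

def vv : Fin 7 → Adj := ![a' - c', a' - c', a' - c', a' + b' - c', a', b', c']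

def phi : MvPolynomial (Fin 7) ℚ →ₐ[ℚ] Adj := aeval vv

lemma phi_X (i : Fin 7) : phi (X i) = vv i := by
  unfold phi
  exact aeval_X (f := vv) i


lemma q1Q : (F Za - F Zc) * (F Za - F Zc) * (F Za - F Zc) * (F Za + F Zb - F Zc) = 0 := by
  simp only [← map_sub F, ← map_add F, ← map_mul F]
  rw [← map_zero F]
  exact congrArg _ (by decide)

lemma q2Q : (F Za - F Zc) * (F Za - F Zc) * (F Za - F Zc) * F Za = 0 := by
  simp only [← map_sub F, ← map_add F, ← map_mul F]
  rw [← map_zero F]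
  exact congrArg _ (by decide)

lemma q3Q : (F Za + F Zb - F Zc) * F Zb = 0 := by
  simp only [← map_sub F, ← map_add F, ← map_mul F]
  rw [← map_zero F]
  exact congrArg _ (by decide)

lemma q4Q : F Za * F Zc = 0 := by
  rw [← map_mul F, ← map_zero F]
  exact congrArg _ (by decide)

lemma q5Q : F Zb * F Zc = 0 := by
  rw [← map_mul F, ← map_zero F]
  exact congrArg _ (by decide)

set_option maxHeartbeats 1000000 in
lemma phi_ker : ∀ p ∈ Ibl, phi p = 0 := by
  intro p hp
  have hgen : ∀ q ∈ ({X 0 - X 4 + X 6, X 1 - X 4 + X 6, X 2 - X 4 + X 6,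
      X 3 - X 4 - X 5 + X 6, X 0 * X 1 * X 2 * X 3, X 0 * X 1 * X 2 * X 4, X 3 * X 5,
      X 4 * X 6, X 5 * X 6} : Set (MvPolynomial (Fin 7) ℚ)), phi q = 0 := by
    intro q hq
    simp only [Set.mem_insert_iff, Set.mem_singleton_iff] at hq
    rcases hq with rfl | rfl | rfl | rfl | rfl | rfl | rfl | rfl | rfl
    · rw [map_add, map_sub, phi_X, phi_X, phi_X]
      show a' - c' - a' + c' = 0
      apply Subtype.ext
      push_cast
      simp only [a'_coe, b'_coe, c'_coe]
      abel
    · rw [map_add, map_sub, phi_X, phi_X, phi_X]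
      show a' - c' - a' + c' = 0
      apply Subtype.ext
      push_cast
      simp only [a'_coe, b'_coe, c'_coe]
      abel
    · rw [map_add, map_sub, phi_X, phi_X, phi_X]
      show a' - c' - a' + c' = 0
      apply Subtype.ext
      push_cast
      simp only [a'_coe, b'_coe, c'_coe]
      abel
    · rw [map_add, map_sub, map_sub, phi_X, phi_X, phi_X, phi_X]
      show a' + b' - c' - a' - b' + c' = 0
      apply Subtype.ext
      push_cast
      simp only [a'_coe, b'_coe, c'_coe]
      abel
    · rw [map_mul, map_mul, map_mul, phi_X, phi_X, phi_X, phi_X]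
      show (a' - c') * (a' - c') * (a' - c') * (a' + b' - c') = 0
      apply Subtype.ext
      push_cast
      simp only [a'_coe, b'_coe, c'_coe]
      exact q1Q
    · rw [map_mul, map_mul, map_mul, phi_X, phi_X, phi_X, phi_X]
      show (a' - c') * (a' - c') * (a' - c') * a' = 0
      apply Subtype.ext
      push_cast
      simp only [a'_coe, b'_coe, c'_coe]
      exact q2Q
    · rw [map_mul, phi_X, phi_X]
      show (a' + b' - c') * b' = 0
      apply Subtype.ext
      push_cast
      simp only [a'_coe, b'_coe, c'_coe]
      exact q3Q
    · rw [map_mul, phi_X, phi_X]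
      show a' * c' = 0
      apply Subtype.ext
      push_cast
      simp only [a'_coe, b'_coe, c'_coe]
      exact q4Q
    · rw [map_mul, phi_X, phi_X]
      show b' * c' = 0
      apply Subtype.ext
      push_cast
      simp only [a'_coe, b'_coe, c'_coe]
      exact q5Q
  rw [Ibl] at hp
  refine Submodule.span_induction ?_ ?_ ?_ ?_ hp
  · intro q hq; exact hgen q hq
  · exact map_zero phi
  · intro x y _ _ hx hy; rw [map_add, hx, hy, add_zero]
  · intro r x _ hx; rw [smul_eq_mul, map_mul, hx, mul_zero]


def psi : Rbl →ₐ[ℚ] Adj := Ideal.Quotient.liftₐ Ibl phi phi_ker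

def colMap : Matrix (Fin 11) (Fin 11) ℚ →ₗ[ℚ] (Fin 11 → ℚ) where
  toFun M := fun i => M i 0
  map_add' := fun _ _ => rfl
  map_smul' := fun _ _ => rfl

def fmap : Rbl →ₗ[ℚ] (Fin 11 → ℚ) :=
  colMap.comp ((Subalgebra.val Adj).toLinearMap.comp psi.toLinearMap)

lemma psi_mk (p : MvPolynomial (Fin 7) ℚ) :
    psi (Ideal.Quotient.mk Ibl p) = phi p := by
  show Ideal.Quotient.liftₐ Ibl phi phi_ker (Ideal.Quotient.mk Ibl p) = phi p
  rfl

lemma fmap_mk (p : MvPolynomial (Fin 7) ℚ) :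
    fmap (Ideal.Quotient.mk Ibl p)
      = fun i => ((phi p : Adj) : Matrix (Fin 11) (Fin 11) ℚ) i 0 := by
  show colMap ((Subalgebra.val Adj) (psi (Ideal.Quotient.mk Ibl p))) = _
  rw [psi_mk]
  rfl

lemma hcol (Z : Matrix (Fin 11) (Fin 11) ℤ) (k : Fin 11)
    (h : (fun i => Z i 0) = (Pi.single k (1:ℤ) : Fin 11 → ℤ)) :
    (fun i => (F Z) i 0) = (Pi.single k (1:ℚ) : Fin 11 → ℚ) := by
  funext i
  have h2 : Z i 0 = (Pi.single k (1:ℤ) : Fin 11 → ℤ) i := congrFun h i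
  show ((Z i 0 : ℤ) : ℚ) = _
  rw [h2]
  rcases eq_or_ne i k with rfl | hik
  · simp
  · simp [Pi.single_apply, hik]

lemma fmap_basis (i : Fin 11) :
    fmap (rblBasisElems i) = (Pi.single i (1:ℚ) : Fin 11 → ℚ) := by
  fin_cases i
  · show fmap (Ideal.Quotient.mk Ibl 1) = _
    rw [fmap_mk, map_one]
    show (fun i => ((1 : Adj) : Matrix (Fin 11) (Fin 11) ℚ) i 0) = _
    rw [OneMemClass.coe_one, ← map_one F]
    exact hcol 1 0 (by decide)
  · show fmap (Ideal.Quotient.mk Ibl (X 4)) = _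
    rw [fmap_mk, phi_X]
    show (fun i => ((a' : Adj) : Matrix (Fin 11) (Fin 11) ℚ) i 0) = _
    rw [a'_coe]
    exact hcol Za 1 (by decide)
  · show fmap (Ideal.Quotient.mk Ibl (X 5)) = _
    rw [fmap_mk, phi_X]
    show (fun i => ((b' : Adj) : Matrix (Fin 11) (Fin 11) ℚ) i 0) = _
    rw [b'_coe]
    exact hcol Zb 2 (by decide)
  · show fmap (Ideal.Quotient.mk Ibl (X 6)) = _
    rw [fmap_mk, phi_X]
    show (fun i => ((c' : Adj) : Matrix (Fin 11) (Fin 11) ℚ) i 0) = _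
    rw [c'_coe]
    exact hcol Zc 3 (by decide)
  · show fmap (Ideal.Quotient.mk Ibl (X 4 ^ 2)) = _
    rw [fmap_mk, map_pow, phi_X]
    show (fun i => ((a' ^ 2 : Adj) : Matrix (Fin 11) (Fin 11) ℚ) i 0) = _
    rw [SubmonoidClass.coe_pow, a'_coe, ← map_pow]
    exact hcol (Za ^ 2) 4 (by decide)
  · show fmap (Ideal.Quotient.mk Ibl (X 5 ^ 2)) = _
    rw [fmap_mk, map_pow, phi_X]
    show (fun i => ((b' ^ 2 : Adj) : Matrix (Fin 11) (Fin 11) ℚ) i 0) = _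
    rw [SubmonoidClass.coe_pow, b'_coe, ← map_pow]
    exact hcol (Zb ^ 2) 5 (by decide)
  · show fmap (Ideal.Quotient.mk Ibl (X 6 ^ 2)) = _
    rw [fmap_mk, map_pow, phi_X]
    show (fun i => ((c' ^ 2 : Adj) : Matrix (Fin 11) (Fin 11) ℚ) i 0) = _
    rw [SubmonoidClass.coe_pow, c'_coe, ← map_pow]
    exact hcol (Zc ^ 2) 6 (by decide)
  · show fmap (Ideal.Quotient.mk Ibl (X 4 ^ 3)) = _
    rw [fmap_mk, map_pow, phi_X]
    show (fun i => ((a' ^ 3 : Adj) : Matrix (Fin 11) (Fin 11) ℚ) i 0) = _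
    rw [SubmonoidClass.coe_pow, a'_coe, ← map_pow]
    exact hcol (Za ^ 3) 7 (by decide)
  · show fmap (Ideal.Quotient.mk Ibl (X 5 ^ 3)) = _
    rw [fmap_mk, map_pow, phi_X]
    show (fun i => ((b' ^ 3 : Adj) : Matrix (Fin 11) (Fin 11) ℚ) i 0) = _
    rw [SubmonoidClass.coe_pow, b'_coe, ← map_pow]
    exact hcol (Zb ^ 3) 8 (by decide)
  · show fmap (Ideal.Quotient.mk Ibl (X 6 ^ 3)) = _
    rw [fmap_mk, map_pow, phi_X]
    show (fun i => ((c' ^ 3 : Adj) : Matrix (Fin 11) (Fin 11) ℚ) i 0) = _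
    rw [SubmonoidClass.coe_pow, c'_coe, ← map_pow]
    exact hcol (Zc ^ 3) 9 (by decide)
  · show fmap (Ideal.Quotient.mk Ibl (X 6 ^ 4)) = _
    rw [fmap_mk, map_pow, phi_X]
    show (fun i => ((c' ^ 4 : Adj) : Matrix (Fin 11) (Fin 11) ℚ) i 0) = _
    rw [SubmonoidClass.coe_pow, c'_coe, ← map_pow]
    exact hcol (Zc ^ 4) 10 (by decide)

/-! ### The quotient-ring side -/

def mkR : MvPolynomial (Fin 7) ℚ →+* Rbl := Ideal.Quotient.mk Ibl

def aR : Rbl := mkR (X 4)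
def bR : Rbl := mkR (X 5)
def cR : Rbl := mkR (X 6)

lemma mk4 : mkR (X 4) = aR := rfl
lemma mk5 : mkR (X 5) = bR := rfl
lemma mk6 : mkR (X 6) = cR := rfl

lemma gen_mem {q : MvPolynomial (Fin 7) ℚ}
    (h : q ∈ ({X 0 - X 4 + X 6, X 1 - X 4 + X 6, X 2 - X 4 + X 6,
      X 3 - X 4 - X 5 + X 6, X 0 * X 1 * X 2 * X 3, X 0 * X 1 * X 2 * X 4, X 3 * X 5,
      X 4 * X 6, X 5 * X 6} : Set (MvPolynomial (Fin 7) ℚ))) : q ∈ Ibl :=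
  Ideal.subset_span h

lemma mkR_zero {q : MvPolynomial (Fin 7) ℚ} (h : q ∈ Ibl) : mkR q = 0 :=
  Ideal.Quotient.eq_zero_iff_mem.mpr h

lemma mk0 : mkR (X 0) = aR - cR := by
  show mkR (X 0) = mkR (X 4) - mkR (X 6)
  rw [← map_sub]
  refine Ideal.Quotient.eq.mpr ?_
  rw [show (X 0 - (X 4 - X 6) : MvPolynomial (Fin 7) ℚ) = X 0 - X 4 + X 6 by ring]
  exact gen_mem (by simp)

lemma mk1 : mkR (X 1) = aR - cR := by
  show mkR (X 1) = mkR (X 4) - mkR (X 6)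
  rw [← map_sub]
  refine Ideal.Quotient.eq.mpr ?_
  rw [show (X 1 - (X 4 - X 6) : MvPolynomial (Fin 7) ℚ) = X 1 - X 4 + X 6 by ring]
  exact gen_mem (by simp)

lemma mk2 : mkR (X 2) = aR - cR := by
  show mkR (X 2) = mkR (X 4) - mkR (X 6)
  rw [← map_sub]
  refine Ideal.Quotient.eq.mpr ?_
  rw [show (X 2 - (X 4 - X 6) : MvPolynomial (Fin 7) ℚ) = X 2 - X 4 + X 6 by ring]
  exact gen_mem (by simp)

lemma mk3 : mkR (X 3) = aR + bR - cR := by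
  show mkR (X 3) = mkR (X 4) + mkR (X 5) - mkR (X 6)
  rw [← map_add, ← map_sub]
  refine Ideal.Quotient.eq.mpr ?_
  rw [show (X 3 - (X 4 + X 5 - X 6) : MvPolynomial (Fin 7) ℚ)
      = X 3 - X 4 - X 5 + X 6 by ring]
  exact gen_mem (by simp)

lemma hac : aR * cR = 0 := by
  show mkR (X 4) * mkR (X 6) = 0
  rw [← map_mul]
  exact mkR_zero (gen_mem (by simp))

lemma hbc : bR * cR = 0 := by
  show mkR (X 5) * mkR (X 6) = 0
  rw [← map_mul]
  exact mkR_zero (gen_mem (by simp))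

lemma h35 : (aR + bR - cR) * bR = 0 := by
  have h : mkR (X 3 * X 5) = 0 := mkR_zero (gen_mem (by simp))
  rw [map_mul, mk3, mk5] at h
  exact h

lemma hab : aR * bR = -(bR * bR) := by linear_combination h35 + hbc

lemma h4' : (aR - cR) ^ 3 * aR = 0 := by
  have h : mkR (X 0 * X 1 * X 2 * X 4) = 0 := mkR_zero (gen_mem (by simp))
  rw [map_mul, map_mul, map_mul, mk0, mk1, mk2, mk4] at h
  linear_combination h

lemma h5' : (aR - cR) ^ 3 * (aR + bR - cR) = 0 := by
  have h : mkR (X 0 * X 1 * X 2 * X 3) = 0 := mkR_zero (gen_mem (by simp))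
  rw [map_mul, map_mul, map_mul, mk0, mk1, mk2, mk3] at h
  linear_combination h

lemma h4 : aR ^ 4 = 0 := by
  linear_combination h4' + (3 * aR ^ 2 - 3 * aR * cR + cR ^ 2) * hac

lemma hb4 : bR ^ 4 = cR ^ 4 := by
  linear_combination -h5' + h4' + (aR ^ 2 - aR * bR + bR ^ 2) * hab
    + (-aR ^ 2 + 3 * aR * cR - 3 * cR ^ 2) * hac
    + (-3 * aR ^ 2 + 3 * aR * cR - cR ^ 2) * hbc

lemma basis_vec : rblBasisElems
    = ![1, aR, bR, cR, aR ^ 2, bR ^ 2, cR ^ 2, aR ^ 3, bR ^ 3, cR ^ 3, cR ^ 4] := by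
  funext j
  fin_cases j
  · exact map_one _
  · rfl
  · rfl
  · rfl
  · exact map_pow _ _ 2
  · exact map_pow _ _ 2
  · exact map_pow _ _ 2
  · exact map_pow _ _ 3
  · exact map_pow _ _ 3
  · exact map_pow _ _ 3
  · exact map_pow _ _ 4

end RblAux

open RblAux in
theorem rbl_basis :
    LinearIndependent ℚ rblBasisElems ∧
    Submodule.span ℚ (Set.range rblBasisElems) = ⊤ ∧
    Module.finrank ℚ Rbl = 11 := by
  have hind : LinearIndependent ℚ rblBasisElems := by
    apply LinearIndependent.of_comp fmap
    have he : (⇑fmap ∘ rblBasisElems) = fun i => (Pi.single i (1:ℚ) : Fin 11 → ℚ) :=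
      funext fun i => fmap_basis i
    rw [he]
    have h3 := (Pi.basisFun ℚ (Fin 11)).linearIndependent
    have h4 : ⇑(Pi.basisFun ℚ (Fin 11)) = fun i => (Pi.single i (1:ℚ) : Fin 11 → ℚ) :=
      funext fun i => Pi.basisFun_apply ℚ (Fin 11) i
    rwa [h4] at h3
  have hm : ∀ j : Fin 11,
      (![1, aR, bR, cR, aR ^ 2, bR ^ 2, cR ^ 2, aR ^ 3, bR ^ 3, cR ^ 3, cR ^ 4] j)
        ∈ Submodule.span ℚ (Set.range rblBasisElems) := by
    intro j
    exact congrFun basis_vec j ▸ Submodule.subset_span ⟨j, rfl⟩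
  have hA : ∀ x ∈ Submodule.span ℚ (Set.range rblBasisElems),
      aR * x ∈ Submodule.span ℚ (Set.range rblBasisElems) := by
    intro x hx
    induction hx using Submodule.span_induction with
    | mem y hy =>
      obtain ⟨j, rfl⟩ := hy
      rw [congrFun basis_vec j]
      fin_cases j
      · show aR * 1 ∈ _; rw [mul_one]; exact hm 1
      · show aR * aR ∈ _
        rw [show aR * aR = aR ^ 2 by ring]; exact hm 4
      · show aR * bR ∈ _
        rw [show aR * bR = -(bR ^ 2) by linear_combination hab]
        exact Submodule.neg_mem _ (hm 5)
      · show aR * cR ∈ _; rw [hac]; exact Submodule.zero_mem _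
      · show aR * aR ^ 2 ∈ _
        rw [show aR * aR ^ 2 = aR ^ 3 by ring]; exact hm 7
      · show aR * bR ^ 2 ∈ _
        rw [show aR * bR ^ 2 = -(bR ^ 3) by linear_combination bR * hab]
        exact Submodule.neg_mem _ (hm 8)
      · show aR * cR ^ 2 ∈ _
        rw [show aR * cR ^ 2 = 0 by linear_combination cR * hac]
        exact Submodule.zero_mem _
      · show aR * aR ^ 3 ∈ _
        rw [show aR * aR ^ 3 = 0 by linear_combination h4]
        exact Submodule.zero_mem _
      · show aR * bR ^ 3 ∈ _
        rw [show aR * bR ^ 3 = -(cR ^ 4) by linear_combination bR ^ 2 * hab - hb4]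
        exact Submodule.neg_mem _ (hm 10)
      · show aR * cR ^ 3 ∈ _
        rw [show aR * cR ^ 3 = 0 by linear_combination cR ^ 2 * hac]
        exact Submodule.zero_mem _
      · show aR * cR ^ 4 ∈ _
        rw [show aR * cR ^ 4 = 0 by linear_combination cR ^ 3 * hac]
        exact Submodule.zero_mem _
    | zero => rw [mul_zero]; exact Submodule.zero_mem _
    | add y z _ _ hy hz => rw [mul_add]; exact Submodule.add_mem _ hy hz
    | smul t y _ hy => rw [mul_smul_comm]; exact Submodule.smul_mem _ t hy
  have hB : ∀ x ∈ Submodule.span ℚ (Set.range rblBasisElems),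
      bR * x ∈ Submodule.span ℚ (Set.range rblBasisElems) := by
    intro x hx
    induction hx using Submodule.span_induction with
    | mem y hy =>
      obtain ⟨j, rfl⟩ := hy
      rw [congrFun basis_vec j]
      fin_cases j
      · show bR * 1 ∈ _; rw [mul_one]; exact hm 2
      · show bR * aR ∈ _
        rw [show bR * aR = -(bR ^ 2) by linear_combination hab]
        exact Submodule.neg_mem _ (hm 5)
      · show bR * bR ∈ _
        rw [show bR * bR = bR ^ 2 by ring]; exact hm 5
      · show bR * cR ∈ _; rw [hbc]; exact Submodule.zero_mem _
      · show bR * aR ^ 2 ∈ _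
        rw [show bR * aR ^ 2 = bR ^ 3 by linear_combination (aR - bR) * hab]
        exact hm 8
      · show bR * bR ^ 2 ∈ _
        rw [show bR * bR ^ 2 = bR ^ 3 by ring]; exact hm 8
      · show bR * cR ^ 2 ∈ _
        rw [show bR * cR ^ 2 = 0 by linear_combination cR * hbc]
        exact Submodule.zero_mem _
      · show bR * aR ^ 3 ∈ _
        rw [show bR * aR ^ 3 = -(cR ^ 4) by
          linear_combination (aR ^ 2 - aR * bR + bR ^ 2) * hab - hb4]
        exact Submodule.neg_mem _ (hm 10)
      · show bR * bR ^ 3 ∈ _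
        rw [show bR * bR ^ 3 = cR ^ 4 by linear_combination hb4]
        exact hm 10
      · show bR * cR ^ 3 ∈ _
        rw [show bR * cR ^ 3 = 0 by linear_combination cR ^ 2 * hbc]
        exact Submodule.zero_mem _
      · show bR * cR ^ 4 ∈ _
        rw [show bR * cR ^ 4 = 0 by linear_combination cR ^ 3 * hbc]
        exact Submodule.zero_mem _
    | zero => rw [mul_zero]; exact Submodule.zero_mem _
    | add y z _ _ hy hz => rw [mul_add]; exact Submodule.add_mem _ hy hz
    | smul t y _ hy => rw [mul_smul_comm]; exact Submodule.smul_mem _ t hy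
  have hC : ∀ x ∈ Submodule.span ℚ (Set.range rblBasisElems),
      cR * x ∈ Submodule.span ℚ (Set.range rblBasisElems) := by
    intro x hx
    induction hx using Submodule.span_induction with
    | mem y hy =>
      obtain ⟨j, rfl⟩ := hy
      rw [congrFun basis_vec j]
      fin_cases j
      · show cR * 1 ∈ _; rw [mul_one]; exact hm 3
      · show cR * aR ∈ _
        rw [show cR * aR = 0 by linear_combination hac]
        exact Submodule.zero_mem _
      · show cR * bR ∈ _
        rw [show cR * bR = 0 by linear_combination hbc]
        exact Submodule.zero_mem _
      · show cR * cR ∈ _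
        rw [show cR * cR = cR ^ 2 by ring]; exact hm 6
      · show cR * aR ^ 2 ∈ _
        rw [show cR * aR ^ 2 = 0 by linear_combination aR * hac]
        exact Submodule.zero_mem _
      · show cR * bR ^ 2 ∈ _
        rw [show cR * bR ^ 2 = 0 by linear_combination bR * hbc]
        exact Submodule.zero_mem _
      · show cR * cR ^ 2 ∈ _
        rw [show cR * cR ^ 2 = cR ^ 3 by ring]; exact hm 9
      · show cR * aR ^ 3 ∈ _
        rw [show cR * aR ^ 3 = 0 by linear_combination aR ^ 2 * hac]
        exact Submodule.zero_mem _
      · show cR * bR ^ 3 ∈ _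
        rw [show cR * bR ^ 3 = 0 by linear_combination bR ^ 2 * hbc]
        exact Submodule.zero_mem _
      · show cR * cR ^ 3 ∈ _
        rw [show cR * cR ^ 3 = cR ^ 4 by ring]; exact hm 10
      · show cR * cR ^ 4 ∈ _
        rw [show cR * cR ^ 4 = 0 by linear_combination (-cR) * hb4 + bR ^ 3 * hbc]
        exact Submodule.zero_mem _
    | zero => rw [mul_zero]; exact Submodule.zero_mem _
    | add y z _ _ hy hz => rw [mul_add]; exact Submodule.add_mem _ hy hz
    | smul t y _ hy => rw [mul_smul_comm]; exact Submodule.smul_mem _ t hy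
  have hX : ∀ (p : MvPolynomial (Fin 7) ℚ), ∀ i : Fin 7,
      mkR p ∈ Submodule.span ℚ (Set.range rblBasisElems) →
      mkR (X i) * mkR p ∈ Submodule.span ℚ (Set.range rblBasisElems) := by
    intro p i hp
    have h0 : mkR (X 0) * mkR p ∈ Submodule.span ℚ (Set.range rblBasisElems) := by
      rw [mk0, sub_mul]; exact Submodule.sub_mem _ (hA _ hp) (hC _ hp)
    have h1 : mkR (X 1) * mkR p ∈ Submodule.span ℚ (Set.range rblBasisElems) := by
      rw [mk1, sub_mul]; exact Submodule.sub_mem _ (hA _ hp) (hC _ hp)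
    have h2 : mkR (X 2) * mkR p ∈ Submodule.span ℚ (Set.range rblBasisElems) := by
      rw [mk2, sub_mul]; exact Submodule.sub_mem _ (hA _ hp) (hC _ hp)
    have h3 : mkR (X 3) * mkR p ∈ Submodule.span ℚ (Set.range rblBasisElems) := by
      rw [mk3, sub_mul, add_mul]
      exact Submodule.sub_mem _ (Submodule.add_mem _ (hA _ hp) (hB _ hp)) (hC _ hp)
    fin_cases i
    · exact h0
    · exact h1
    · exact h2
    · exact h3
    · exact hA _ hp
    · exact hB _ hp
    · exact hC _ hp
  have hall : ∀ p : MvPolynomial (Fin 7) ℚ,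
      mkR p ∈ Submodule.span ℚ (Set.range rblBasisElems) := by
    intro p
    induction p using MvPolynomial.induction_on with
    | C q =>
      rw [show (C q : MvPolynomial (Fin 7) ℚ) = q • 1 by
        rw [MvPolynomial.smul_eq_C_mul, mul_one]]
      have e2 : mkR (q • (1 : MvPolynomial (Fin 7) ℚ))
          = q • mkR (1 : MvPolynomial (Fin 7) ℚ) :=
        map_smul (Ideal.Quotient.mkₐ ℚ Ibl) q 1
      rw [e2, map_one]
      exact Submodule.smul_mem _ q (hm 0)
    | add p q hp hq => rw [map_add]; exact Submodule.add_mem _ hp hq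
    | mul_X p i hp => rw [map_mul, mul_comm]; exact hX p i hp
  have hspan : Submodule.span ℚ (Set.range rblBasisElems) = ⊤ := by
    rw [Submodule.eq_top_iff']
    intro x
    obtain ⟨p, rfl⟩ := Ideal.Quotient.mk_surjective x
    exact hall p
  have hfr : Module.finrank ℚ Rbl = 11 := by
    have B : Module.Basis (Fin 11) ℚ Rbl := Module.Basis.mk hind hspan.ge
    rw [Module.finrank_eq_card_basis B, Fintype.card_fin]
  exact ⟨hind, hspan, hfr⟩

end
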